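/- Let u, v be binary words with u nonempty, v occurring as a subsequence of u, and let k be an integer with 2^k > |u|. Let r be the number of occurrences of v in u and let i₁,…,i_r be, for each occurrence, the number of zeros of u strictly after that occurrence. Then (u 0^{2^k} 1 choose v 0^{2^k} 1) = Σ_{ℓ=1}^{r} (2^k + i_ℓ choose 2^k). -/

import Mathlib

/-- The binomial coefficient of words: the number of occurrences of the second
word as a scattered subsequence of the first. -/
def wb {A : Type*} [DecidableEq A] : List A → List A → ℕ
  | _, [] => 1
  | [], _ :: _ => 0
  | a :: u, b :: v => wb u (b :: v) + (if a = b then wb u v else 0)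

/-- The occurrences of `v` as a scattered subsequence of `u`, given as the sets
of indices of `u` that, read in increasing order, spell out `v`. -/
def occurrences (u v : List Bool) : Finset (Finset (Fin u.length)) :=
  Finset.univ.filter (fun s => (s.sort (· ≤ ·)).map u.get = v)

/-- The number of zeros of `u` strictly after the occurrence `s`. -/
def zerosAfter (u : List Bool) (s : Finset (Fin u.length)) : ℕ :=
  (Finset.univ.filter
    (fun j : Fin u.length => (∀ i ∈ s, i < j) ∧ u.get j = false)).card

/-!
Write `N = 2^k`. Removing the final letter,
`(u 0^N 1 choose v 0^N 1) = (u 0^N choose v 0^N 1) + (u 0^N choose v 0^N)`. The final `1` of an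
occurrence of `v 0^N 1` cannot lie among the trailing zeros, so the first term is
`(u choose v 0^N 1) = 0`, as `|u| < N`.

For the second term: when `m ≤ j`, an occurrence of `v 0^j` in `u 0^m` has its `v`-part `s`
inside `u`, and its `j` zeros are chosen among the `m + z(s)` zeros after `s`, where `z(s)`
counts those in `u`; hence `(u 0^m choose v 0^j) = ∑ₛ (m + z(s) choose j)`. This is proved by
induction on `u`, splitting the occurrences according to whether they use its first letter.
-/

open Finset

section Binomial

variable {A : Type*} [DecidableEq A]

@[simp] lemma wb_nil_right (u : List A) : wb u [] = 1 := by
  cases u <;> rfl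

@[simp] lemma wb_nil_cons (b : A) (v : List A) : wb [] (b :: v) = 0 := rfl

@[simp] lemma wb_cons_cons (a b : A) (u v : List A) :
    wb (a :: u) (b :: v) = wb u (b :: v) + if a = b then wb u v else 0 := rfl

lemma wb_eq_zero_of_length_lt {u v : List A} (h : u.length < v.length) : wb u v = 0 := by
  induction u generalizing v with
  | nil => cases v <;> simp_all
  | cons a u ih =>
    cases v with
    | nil => simp at h
    | cons b v =>
      simp only [List.length_cons] at h
      rw [wb_cons_cons, ih (by simp; omega), ih (by omega)]
      simp

lemma wb_replicate_right (u : List A) (a : A) (j : ℕ) :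
    wb u (List.replicate j a) = (u.count a).choose j := by
  induction u generalizing j with
  | nil => cases j <;> simp [List.replicate_succ]
  | cons c u ih =>
    cases j with
    | zero => simp
    | succ j =>
      rw [List.replicate_succ, wb_cons_cons, ← List.replicate_succ, ih, ih, List.count_cons]
      by_cases hca : c = a
      · simp [hca, Nat.choose_succ_succ', add_comm]
      · simp [hca]

lemma wb_append_singleton (x y : List A) (a b : A) :
    wb (x ++ [a]) (y ++ [b]) = wb x (y ++ [b]) + if a = b then wb x y else 0 := by
  induction x generalizing y with
  | nil => cases y <;> simp [wb_eq_zero_of_length_lt]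
  | cons c x ih =>
    cases y with
    | nil =>
      have h := ih []
      simp only [List.nil_append, wb_nil_right] at h
      simp only [List.nil_append, List.cons_append, wb_cons_cons, wb_nil_right, h]
      split_ifs <;> omega
    | cons d y =>
      simp only [List.cons_append, wb_cons_cons]
      rw [← List.cons_append, ih, ih]
      split_ifs <;> ring

lemma wb_append_replicate_of_ne {a b : A} (hab : a ≠ b) (x y : List A) (n : ℕ) :
    wb (x ++ List.replicate n a) (y ++ [b]) = wb x (y ++ [b]) := by
  induction n with
  | zero => simp
  | succ n ih =>
    rw [List.replicate_succ', ← List.append_assoc, wb_append_singleton, if_neg hab, add_zero, ih]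

end Binomial

theorem Finset.sort_map_of_strictMono {α β : Type*} [LinearOrder α] [LinearOrder β] {f : α ↪ β}
    (hf : StrictMono f) (s : Finset α) :
    (s.map f).sort (· ≤ ·) = (s.sort (· ≤ ·)).map f := by
  refine List.Perm.eq_of_pairwise' (pairwise_sort _ _)
    ((pairwise_sort _ _).map f fun _ _ h => hf.monotone h) ?_
  rw [← Multiset.coe_eq_coe, sort_eq, map_val, ← Multiset.map_coe, sort_eq]

theorem Finset.powerset_map {α β : Type*} (f : α ↪ β) (s : Finset α) :
    (s.map f).powerset = s.powerset.map (mapEmbedding f).toEmbedding := by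
  ext t
  simp [subset_map_iff, eq_comm]

theorem Fin.sum_univ_finset_succ {M : Type*} [AddCommMonoid M] {n : ℕ}
    (f : Finset (Fin (n + 1)) → M) :
    ∑ s, f s = ∑ t : Finset (Fin n), f (t.map (Fin.succEmb n)) +
      ∑ t : Finset (Fin n), f (insert 0 (t.map (Fin.succEmb n))) := by
  rw [← powerset_univ, Fin.univ_succ, cons_eq_insert, sum_powerset_insert (by simp), powerset_map,
    sum_map, sum_map, powerset_univ]
  rfl

lemma mem_occurrences {u v : List Bool} {s : Finset (Fin u.length)} :
    s ∈ occurrences u v ↔ (s.sort (· ≤ ·)).map u.get = v := by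
  simp [occurrences]

lemma occurrences_nil_right (u : List Bool) : occurrences u [] = {∅} := by
  ext s
  simp [mem_occurrences, ← List.length_eq_zero_iff]

lemma occurrences_nil_cons (b : Bool) (w : List Bool) : occurrences [] (b :: w) = ∅ := by
  ext s
  obtain rfl : s = ∅ := Subsingleton.elim (α := Finset (Fin 0)) s ∅
  rw [mem_occurrences, sort_empty]
  simp

lemma nonempty_of_mem_occurrences_cons {u w : List Bool} {b : Bool} {s : Finset (Fin u.length)}
    (hs : s ∈ occurrences u (b :: w)) : s.Nonempty := by
  rw [nonempty_iff_ne_empty]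
  rintro rfl
  simp [mem_occurrences] at hs

lemma Fin.sort_insert_zero_map_succEmb {n : ℕ} (t : Finset (Fin n)) :
    (insert 0 (t.map (Fin.succEmb n))).sort (· ≤ ·) = 0 :: (t.sort (· ≤ ·)).map Fin.succ := by
  rw [sort_insert _ (fun _ _ => Fin.zero_le _) (by simp),
    sort_map_of_strictMono Fin.strictMono_succ]
  rfl

lemma map_succEmb_mem_occurrences_cons (a : Bool) (u v : List Bool)
    (t : Finset (Fin u.length)) :
    t.map (Fin.succEmb u.length) ∈ occurrences (a :: u) v ↔ t ∈ occurrences u v := by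
  rw [mem_occurrences, mem_occurrences, sort_map_of_strictMono Fin.strictMono_succ,
    List.map_map]
  rfl

lemma insert_zero_mem_occurrences_cons (a b : Bool) (u w : List Bool)
    (t : Finset (Fin u.length)) :
    insert 0 (t.map (Fin.succEmb u.length)) ∈ occurrences (a :: u) (b :: w) ↔
      a = b ∧ t ∈ occurrences u w := by
  rw [mem_occurrences, mem_occurrences, ← List.cons_eq_cons]
  erw [Fin.sort_insert_zero_map_succEmb, List.map_cons, List.map_map]
  rfl

lemma sum_occurrences_cons {M : Type*} [AddCommMonoid M] (a b : Bool) (u w : List Bool)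
    (g : Finset (Fin (u.length + 1)) → M) :
    ∑ s ∈ occurrences (a :: u) (b :: w), g s =
      ∑ t ∈ occurrences u (b :: w), g (t.map (Fin.succEmb u.length)) +
        if a = b then ∑ t ∈ occurrences u w, g (insert 0 (t.map (Fin.succEmb u.length)))
        else 0 := by
  rw [← Fintype.sum_ite_mem]
  refine (Fin.sum_univ_finset_succ (n := u.length) _).trans ?_
  simp only [map_succEmb_mem_occurrences_cons, insert_zero_mem_occurrences_cons,
    Fintype.sum_ite_mem]
  split_ifs with hab <;> simp [hab]

lemma zerosAfter_empty (u : List Bool) : zerosAfter u ∅ = u.count false := by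
  convert Fin.card_filter_univ_eq_vector_get_eq_count false ⟨u, rfl⟩ using 1
  · simp only [zerosAfter, notMem_empty, IsEmpty.forall_iff, implies_true, true_and]
    rfl
  · rfl

lemma zerosAfter_cons_map_succEmb (a : Bool) (u : List Bool) {t : Finset (Fin u.length)}
    (ht : t.Nonempty) : zerosAfter (a :: u) (t.map (Fin.succEmb u.length)) = zerosAfter u t := by
  obtain ⟨i, hi⟩ := ht
  refine (Fin.card_filter_univ_succ' (n := u.length) _).trans ?_
  rw [if_neg (fun h => Fin.not_lt_zero _ (h.1 _ (mem_map_of_mem _ hi)))]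
  simp [zerosAfter]

lemma zerosAfter_cons_insert_zero (a : Bool) (u : List Bool) (t : Finset (Fin u.length)) :
    zerosAfter (a :: u) (insert 0 (t.map (Fin.succEmb u.length))) = zerosAfter u t := by
  refine (Fin.card_filter_univ_succ' (n := u.length) _).trans ?_
  rw [if_neg (fun h => Fin.not_lt_zero _ (h.1 _ (mem_insert_self _ _)))]
  simp [zerosAfter, Fin.succ_pos]

lemma wb_append_replicate_false_replicate_false (u : List Bool) (m j : ℕ) :
    wb (u ++ List.replicate m false) (List.replicate j false) =
      ∑ s ∈ occurrences u [], (m + zerosAfter u s).choose j := by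
  rw [wb_replicate_right, List.count_append, List.count_replicate_self,
    occurrences_nil_right, sum_singleton, zerosAfter_empty, add_comm]

theorem wb_append_replicate_false_eq_sum {m j : ℕ} (hmj : m ≤ j) (u v : List Bool) :
    wb (u ++ List.replicate m false) (v ++ List.replicate j false) =
      ∑ s ∈ occurrences u v, (m + zerosAfter u s).choose j := by
  induction u generalizing v with
  | nil =>
    cases v with
    | nil => exact wb_append_replicate_false_replicate_false [] m j
    | cons b w => rw [occurrences_nil_cons, sum_empty, wb_eq_zero_of_length_lt (by simp; omega)]
  | cons a u ih =>
    cases v with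
    | nil => exact wb_append_replicate_false_replicate_false _ m j
    | cons b w =>
      rw [sum_occurrences_cons, List.cons_append, List.cons_append, wb_cons_cons,
        ← List.cons_append, ih, ih]
      congr 1
      · refine sum_congr rfl fun t ht => ?_
        rw [zerosAfter_cons_map_succEmb a u (nonempty_of_mem_occurrences_cons ht)]
      · refine if_congr Iff.rfl (sum_congr rfl fun t _ => ?_) rfl
        rw [zerosAfter_cons_insert_zero]

theorem stmt_16_general (u v : List Bool) (k : ℕ) (hk : u.length < 2 ^ k) :
    wb (u ++ List.replicate (2 ^ k) false ++ [true])
       (v ++ List.replicate (2 ^ k) false ++ [true]) =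
      ∑ s ∈ occurrences u v, Nat.choose (2 ^ k + zerosAfter u s) (2 ^ k) := by
  rw [wb_append_singleton, if_pos rfl, wb_append_replicate_of_ne Bool.false_ne_true,
    wb_eq_zero_of_length_lt (by simp; omega), zero_add, wb_append_replicate_false_eq_sum le_rfl]

theorem stmt_16 (u v : List Bool) (hu : u ≠ []) (k : ℕ) (hk : u.length < 2 ^ k)
    (hv : 0 < wb u v) :
    wb (u ++ List.replicate (2 ^ k) false ++ [true])
       (v ++ List.replicate (2 ^ k) false ++ [true]) =
      ∑ s ∈ occurrences u v, Nat.choose (2 ^ k + zerosAfter u s) (2 ^ k) :=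
  stmt_16_general u v k hk
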